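/- Let G be a finite group acting on a finite set X, and let [H_1], …, [H_r] be the distinct conjugacy classes of point stabilizers. For each i let N_i = N_G(H_i), U(H_i) = {[G_x]_{N_i} : x ∈ X, H_i ≤ G_x}, and κ_G(X) = |{i : |O_[H_i]| = 1}|. Then the relative rank of End_G(X) modulo Aut_G(X) satisfies Rank(End_G(X) : Aut_G(X)) = Σ_{i=1}^r |U(H_i)| − κ_G(X). -/

import Mathlib

/-!
Write `e(p, q)` for the equivariant map sending `g • p ↦ g • q` on the orbit of `p` and fixing
everything else. Every equivariant `f` is a product of automorphisms and such maps: take a moved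
point `z` with maximal stabilizer; if `f` fixes `f z` then `f = f' ∘ e(z, f z)`, and otherwise
maximality gives `G_{f z} = G_z`, so `f = f' ∘ b` with `b` the automorphism swapping the orbits
of `z` and `f z`; either way `f'` fixes more points. Up to conjugation by automorphisms,
`e(x, y)` with `y ∉ G • x` depends only on the class `[H]` of `G_x` and the `N_G(H)`-class `C`
of `G_y`, so one generator per `C ∈ U(H)` suffices, and none is needed for `C = [H]_{N_G(H)}`
when only one orbit has type `[H]`.

Conversely, in a factorization of `e(x, y)` into generators, the first non-injective factor `c`
is still injective and stabilizer-preserving off one orbit of type `[H]`. It must identify a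
point `x'` of that orbit with a point `z` of another orbit (otherwise a pigeonhole count over the
points whose stabilizer is conjugate to `G_{c x'}` makes `c` injective), so `G_{c x'} = G_z`
is also the stabilizer of the image of `x'` under the whole product, which is conjugate to `G_y`.
The pair `(H, C)` can be read off such a `c`, so a generating set has a separate generator for
each pair.
-/

/-- The monoid of all `G`-equivariant transformations of `X`, as a submonoid of
`Function.End X` (composition of functions). -/
def gEnd (G X : Type*) [Group G] [MulAction G X] : Submonoid (Function.End X) where
  carrier := {f | ∀ (g : G) (x : X), f (g • x) = g • f x}
  one_mem' := fun _ _ => rfl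
  mul_mem' := fun {f₁ f₂} h₁ h₂ g x => by
    show f₁ (f₂ (g • x)) = g • f₁ (f₂ x)
    rw [h₂, h₁]

/-- The group of all bijective `G`-equivariant transformations of `X`, as a subgroup of
`Equiv.Perm X`. -/
def gAut (G X : Type*) [Group G] [MulAction G X] : Subgroup (Equiv.Perm X) where
  carrier := {f | ∀ (g : G) (x : X), f (g • x) = g • f x}
  one_mem' := fun _ _ => rfl
  mul_mem' := fun {f₁ f₂} h₁ h₂ g x => by
    show f₁ (f₂ (g • x)) = g • f₁ (f₂ x)
    rw [h₂, h₁]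
  inv_mem' := fun {f} hf g x => f.injective (by
    rw [← Equiv.Perm.mul_apply, mul_inv_cancel, Equiv.Perm.one_apply, hf,
      ← Equiv.Perm.mul_apply, mul_inv_cancel, Equiv.Perm.one_apply])

/-- The conjugate subgroup `g K g⁻¹`. -/
def conjSub {G : Type*} [Group G] (g : G) (K : Subgroup G) : Subgroup G :=
  Subgroup.map (MulAut.conj g).toMonoidHom K

/-- The `N`-conjugacy class `[K]_N = {gKg⁻¹ : g ∈ N}` of a subgroup `K`. -/
def nConjClass {G : Type*} [Group G] (N K : Subgroup G) : Set (Subgroup G) :=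
  {L | ∃ n ∈ N, L = conjSub n K}

/-- The set `O_[H]` of `G`-orbits of `X` whose point stabilizers are conjugate to `H`. -/
def classOrbits (G X : Type*) [Group G] [MulAction G X] (H : Subgroup G) : Set (Set X) :=
  {s | ∃ y : X, (∃ g : G, MulAction.stabilizer G y = conjSub g H) ∧ s = MulAction.orbit G y}

/-- The set `U(H)` of `N_G(H)`-conjugacy classes of point stabilizers of `X` containing `H`. -/
def stabU (G X : Type*) [Group G] [MulAction G X] (H : Subgroup G) : Set (Set (Subgroup G)) :=
  {C | ∃ x : X, H ≤ MulAction.stabilizer G x ∧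
    C = nConjClass (Subgroup.normalizer (H : Set G)) (MulAction.stabilizer G x)}

/-- The elements of `Aut_G(X)` viewed as a set of transformations of `X`. -/
def autSet (G X : Type*) [Group G] [MulAction G X] : Set (Function.End X) :=
  (fun e : Equiv.Perm X => (e : X → X)) '' (gAut G X)

/-- The relative rank `Rank(T : N)` of a submonoid `T` modulo a set `N`: the least
cardinality of a set `W` with `⟨W ∪ N⟩ = T`. -/
noncomputable def relRank {M : Type*} [Monoid M] (T : Submonoid M) (N : Set M) : ℕ :=
  sInf {n : ℕ | ∃ W : Finset M, W.card = n ∧ Submonoid.closure (↑W ∪ N) = T}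

open MulAction

section Conj

variable {G : Type*} [Group G]

lemma conjSub_one (K : Subgroup G) : conjSub 1 K = K := by
  ext a
  simp [conjSub]

lemma conjSub_mul (a b : G) (K : Subgroup G) :
    conjSub (a * b) K = conjSub a (conjSub b K) := by
  simp only [conjSub, Subgroup.map_map, map_mul]
  rfl

lemma eq_conjSub_of_conjSub_eq {g g' : G} {K L : Subgroup G} (h : conjSub g K = conjSub g' L) :
    L = conjSub (g'⁻¹ * g) K := by
  rw [conjSub_mul, h, ← conjSub_mul, inv_mul_cancel, conjSub_one]

lemma conjSub_mono (g : G) {K L : Subgroup G} (h : K ≤ L) : conjSub g K ≤ conjSub g L :=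
  Subgroup.map_mono h

lemma conjSub_eq_self_iff {n : G} {K : Subgroup G} :
    conjSub n K = K ↔ n ∈ Subgroup.normalizer (K : Set G) :=
  Subgroup.mem_normalizer_iff_map_conj_eq.symm

lemma conjSub_eq_self_of_le [Finite G] {g : G} {K : Subgroup G} (h : K ≤ conjSub g K) :
    conjSub g K = K :=
  (Subgroup.eq_of_le_of_card_ge h
    (Subgroup.card_map_of_injective (MulAut.conj g).injective).le).symm

lemma nConjClass_conjSub {N K : Subgroup G} {n : G} (hn : n ∈ N) :
    nConjClass N (conjSub n K) = nConjClass N K := by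
  ext L
  constructor
  · rintro ⟨m, hm, rfl⟩
    exact ⟨m * n, N.mul_mem hm hn, (conjSub_mul m n K).symm⟩
  · rintro ⟨m, hm, rfl⟩
    refine ⟨m * n⁻¹, N.mul_mem hm (N.inv_mem hn), ?_⟩
    rw [← conjSub_mul, inv_mul_cancel_right]

lemma nConjClass_eq_iff {N K L : Subgroup G} :
    nConjClass N L = nConjClass N K ↔ ∃ n ∈ N, L = conjSub n K := by
  refine ⟨fun h => ?_, fun ⟨n, hn, hL⟩ => hL ▸ nConjClass_conjSub hn⟩
  change L ∈ nConjClass N K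
  rw [← h]
  exact ⟨1, N.one_mem, (conjSub_one L).symm⟩

end Conj

section Equivariant

variable {G X : Type*} [Group G] [MulAction G X]

lemma stabilizer_smul_eq_conjSub (g : G) (x : X) :
    stabilizer G (g • x) = conjSub g (stabilizer G x) :=
  stabilizer_smul_eq_stabilizer_map_conj g x

lemma smul_mem_orbit_iff {g : G} {z p : X} : g • z ∈ orbit G p ↔ z ∈ orbit G p := by
  rw [← orbit_eq_iff, orbit_smul, orbit_eq_iff]

lemma stabilizer_le_stabilizer_apply {f : Function.End X} (hf : f ∈ gEnd G X) (x : X) :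
    stabilizer G x ≤ stabilizer G (f x) := fun g (hg : g • x = x) =>
  show g • f x = f x by rw [← hf, hg]

lemma apply_smul_eq_smul_iff {f : Function.End X} (hf : f ∈ gEnd G X) (g : G) (z : X) :
    f (g • z) = g • z ↔ f z = z := by
  rw [hf g z, smul_left_cancel_iff]

lemma stabilizer_apply_eq_of_injOn {f : Function.End X} (hf : f ∈ gEnd G X) {x : X}
    (hinj : Set.InjOn f (orbit G x)) : stabilizer G (f x) = stabilizer G x :=
  le_antisymm (fun g (hg : g • f x = f x) =>
      hinj (mem_orbit x g) (mem_orbit_self x) ((hf g x).trans hg))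
    (stabilizer_le_stabilizer_apply hf x)

lemma injOn_orbit_of_stabilizer_apply_eq {f : Function.End X} (hf : f ∈ gEnd G X) {x : X}
    (h : stabilizer G (f x) = stabilizer G x) : Set.InjOn f (orbit G x) := by
  rintro _ ⟨g₁, rfl⟩ _ ⟨g₂, rfl⟩ heq
  have hmem : g₂⁻¹ * g₁ ∈ stabilizer G (f x) := by
    change (g₂⁻¹ * g₁) • f x = f x
    rw [mul_smul, ← hf g₁ x, heq, hf g₂ x, inv_smul_smul]
  rw [h] at hmem
  change (g₂⁻¹ * g₁) • x = x at hmem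
  rw [mul_smul, inv_smul_eq_iff] at hmem
  exact hmem

lemma apply_mem_orbit_apply_iff {f : Function.End X} (hf : f ∈ gEnd G X)
    (hinj : Function.Injective f) {a b : X} : f a ∈ orbit G (f b) ↔ a ∈ orbit G b := by
  constructor
  · rintro ⟨g, hg⟩
    exact ⟨g, hinj ((hf g b).trans hg)⟩
  · rintro ⟨g, rfl⟩
    exact ⟨g, (hf g b).symm⟩

lemma mem_gEnd_of_mem_autSet {a : Function.End X} (ha : a ∈ autSet G X) : a ∈ gEnd G X := by
  obtain ⟨b, hb, rfl⟩ := ha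
  exact hb

lemma injective_of_mem_autSet {a : Function.End X} (ha : a ∈ autSet G X) :
    Function.Injective a := by
  obtain ⟨b, -, rfl⟩ := ha
  exact b.injective

lemma ite_mem_gEnd {S : Set X} [DecidablePred (· ∈ S)]
    (hS : ∀ (g : G) (z : X), g • z ∈ S ↔ z ∈ S) {f f' : Function.End X}
    (hf : f ∈ gEnd G X) (hf' : f' ∈ gEnd G X) :
    (fun z => if z ∈ S then f z else f' z : Function.End X) ∈ gEnd G X := by
  intro g z
  by_cases hz : z ∈ S
  · simp only [hz, hS, if_true]
    exact hf g z
  · simp only [hz, hS, if_false]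
    exact hf' g z

end Equivariant

section Elementary

variable (G : Type*) {X : Type*} [Group G] [MulAction G X]

open scoped Classical in
/-- The map `g • p ↦ g • q` on the orbit of `p`, extended by the identity; it is well defined
(independent of the choice of `g`) when `stabilizer G p ≤ stabilizer G q`. -/
noncomputable def elemEnd (p q : X) : Function.End X := fun z =>
  if h : z ∈ orbit G p then (mem_orbit_iff.mp h).choose • q else z

variable {G}

lemma elemEnd_smul {p q : X} (hpq : stabilizer G p ≤ stabilizer G q) (g : G) :
    elemEnd G p q (g • p) = g • q := by
  have h : g • p ∈ orbit G p := mem_orbit p g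
  simp only [elemEnd, dif_pos h]
  set g' := (mem_orbit_iff.mp h).choose
  have hg' : (g⁻¹ * g') • p = p := by
    rw [mul_smul, (mem_orbit_iff.mp h).choose_spec, inv_smul_smul]
  rw [← smul_inv_smul g (g' • q), ← mul_smul g⁻¹, hpq hg']

lemma elemEnd_apply_self {p q : X} (hpq : stabilizer G p ≤ stabilizer G q) :
    elemEnd G p q p = q := by
  simpa using elemEnd_smul hpq 1

lemma elemEnd_apply_of_notMem {p q z : X} (hz : z ∉ orbit G p) : elemEnd G p q z = z :=
  dif_neg hz

lemma elemEnd_mem_gEnd {p q : X} (hpq : stabilizer G p ≤ stabilizer G q) :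
    elemEnd G p q ∈ gEnd G X := by
  intro g z
  by_cases hz : z ∈ orbit G p
  · obtain ⟨g₀, rfl⟩ := mem_orbit_iff.mp hz
    rw [← mul_smul, elemEnd_smul hpq, elemEnd_smul hpq, mul_smul]
  · rw [elemEnd_apply_of_notMem hz, elemEnd_apply_of_notMem (mt smul_mem_orbit_iff.mp hz)]

lemma elemEnd_smul_smul {p q : X} (hpq : stabilizer G p ≤ stabilizer G q) (g : G) :
    elemEnd G (g • p) (g • q) = elemEnd G p q := by
  have hpq' : stabilizer G (g • p) ≤ stabilizer G (g • q) := by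
    rw [stabilizer_smul_eq_conjSub, stabilizer_smul_eq_conjSub]
    exact conjSub_mono g hpq
  funext z
  by_cases hz : z ∈ orbit G p
  · obtain ⟨h, rfl⟩ := mem_orbit_iff.mp hz
    rw [elemEnd_smul hpq,
      show h • p = (h * g⁻¹) • g • p by rw [smul_smul, inv_mul_cancel_right],
      elemEnd_smul hpq', smul_smul, inv_mul_cancel_right]
  · rw [elemEnd_apply_of_notMem hz, elemEnd_apply_of_notMem (by rwa [orbit_smul])]

lemma elemEnd_apply_apply {b : Equiv.Perm X} (hb : b ∈ gAut G X) {p q : X}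
    (hpq : stabilizer G p ≤ stabilizer G q) (w : X) :
    elemEnd G (b p) (b q) (b w) = b (elemEnd G p q w) := by
  have hbE : (⇑b : X → X) ∈ gEnd G X := hb
  by_cases hw : w ∈ orbit G p
  · have hbpq : stabilizer G (b p) ≤ stabilizer G (b q) := by
      rwa [stabilizer_apply_eq_of_injOn hbE b.injective.injOn,
        stabilizer_apply_eq_of_injOn hbE b.injective.injOn]
    obtain ⟨g, rfl⟩ := mem_orbit_iff.mp hw
    rw [elemEnd_smul hpq, hb g p, elemEnd_smul hbpq, hb g q]
  · rw [elemEnd_apply_of_notMem hw,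
      elemEnd_apply_of_notMem (mt (apply_mem_orbit_apply_iff hbE b.injective).mp hw)]

end Elementary

section Swap

variable (G : Type*) {X : Type*} [Group G] [MulAction G X]

open scoped Classical in
noncomputable def orbitSwap (p q : X) : Function.End X := fun z =>
  if z ∈ orbit G p then elemEnd G p q z else elemEnd G q p z

variable {G}

lemma orbitSwap_smul_left {p q : X} (hpq : stabilizer G p ≤ stabilizer G q) (g : G) :
    orbitSwap G p q (g • p) = g • q := by
  classical
  rw [orbitSwap, if_pos (mem_orbit p g), elemEnd_smul hpq]

lemma orbitSwap_smul_right {p q : X} (hqp : stabilizer G q ≤ stabilizer G p)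
    (hq : q ∉ orbit G p) (g : G) : orbitSwap G p q (g • q) = g • p := by
  classical
  rw [orbitSwap, if_neg (mt smul_mem_orbit_iff.mp hq), elemEnd_smul hqp]

lemma orbitSwap_apply_of_notMem {p q z : X} (hp : z ∉ orbit G p) (hq : z ∉ orbit G q) :
    orbitSwap G p q z = z := by
  classical
  rw [orbitSwap, if_neg hp, elemEnd_apply_of_notMem hq]

lemma orbitSwap_leftInverse {p q : X} (h : stabilizer G p = stabilizer G q) :
    Function.LeftInverse (orbitSwap G q p) (orbitSwap G p q) := by
  intro z
  by_cases hp : z ∈ orbit G p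
  · obtain ⟨g, rfl⟩ := mem_orbit_iff.mp hp
    rw [orbitSwap_smul_left h.le, orbitSwap_smul_left h.ge]
  by_cases hq : z ∈ orbit G q
  · obtain ⟨g, rfl⟩ := mem_orbit_iff.mp hq
    have hqp : q ∉ orbit G p := mt smul_mem_orbit_iff.mpr hp
    rw [orbitSwap_smul_right h.ge hqp, orbitSwap_smul_right h.le (mt mem_orbit_symm.mp hqp)]
  · rw [orbitSwap_apply_of_notMem hp hq, orbitSwap_apply_of_notMem hq hp]

lemma orbitSwap_mem_gEnd {p q : X} (h : stabilizer G p = stabilizer G q) :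
    orbitSwap G p q ∈ gEnd G X := by
  classical
  exact ite_mem_gEnd (fun _ _ => smul_mem_orbit_iff) (elemEnd_mem_gEnd h.le)
    (elemEnd_mem_gEnd h.ge)

lemma exists_gAut_apply_eq {p q : X} (h : stabilizer G p = stabilizer G q) :
    ∃ b ∈ gAut G X, b p = q ∧ ∀ z, z ∉ orbit G p → z ∉ orbit G q → b z = z :=
  have hp : orbitSwap G p q p = q := by simpa using orbitSwap_smul_left (G := G) h.le 1
  ⟨⟨orbitSwap G p q, orbitSwap G q p, orbitSwap_leftInverse h, orbitSwap_leftInverse h.symm⟩,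
    orbitSwap_mem_gEnd h, hp,
    fun _ => orbitSwap_apply_of_notMem⟩

lemma exists_gAut_apply_eq_apply_eq {u u' v v' : X} (hu : stabilizer G u = stabilizer G u')
    (hv : stabilizer G v = stabilizer G v') (hvu : v ∉ orbit G u) (hvu' : v' ∉ orbit G u') :
    ∃ b ∈ gAut G X, b u = u' ∧ b v = v' := by
  obtain ⟨b₁, hb₁, hb₁u, -⟩ := exists_gAut_apply_eq hu
  have hb₁E : (⇑b₁ : X → X) ∈ gEnd G X := hb₁
  obtain ⟨b₂, hb₂, hb₂v, hb₂fix⟩ := exists_gAut_apply_eq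
    ((stabilizer_apply_eq_of_injOn hb₁E b₁.injective.injOn).trans hv)
  refine ⟨b₂ * b₁, (gAut G X).mul_mem hb₂ hb₁, ?_, hb₂v⟩
  change b₂ (b₁ u) = u'
  rw [hb₁u]
  refine hb₂fix u' ?_ (mt mem_orbit_symm.mp hvu')
  rw [← hb₁u, apply_mem_orbit_apply_iff hb₁E b₁.injective, mem_orbit_symm]
  exact hvu

lemma elemEnd_mem_of_stabilizer_conj {M : Submonoid (Function.End X)}
    (haut : autSet G X ⊆ M) {p q x y : X} {g : G} (hxy : stabilizer G x ≤ stabilizer G y)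
    (hyx : y ∉ orbit G x) (hqp : q ∉ orbit G p)
    (hp : stabilizer G p = conjSub g (stabilizer G x))
    (hq : stabilizer G q = conjSub g (stabilizer G y)) (hmem : elemEnd G x y ∈ M) :
    elemEnd G p q ∈ M := by
  have hstab : ∀ {z w : X}, stabilizer G z = conjSub g (stabilizer G w) →
      stabilizer G (g⁻¹ • z) = stabilizer G w := fun h => by
    rw [stabilizer_smul_eq_conjSub, h, ← conjSub_mul, inv_mul_cancel, conjSub_one]
  obtain ⟨b, hb, hbp, hbq⟩ := exists_gAut_apply_eq_apply_eq (hstab hp) (hstab hq)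
    (by rwa [orbit_smul, smul_mem_orbit_iff]) hyx
  have hconj : elemEnd G p q = (show Function.End X from ⇑b⁻¹) * elemEnd G x y *
      (show Function.End X from ⇑b) := by
    rw [← elemEnd_smul_smul (hp ▸ hq ▸ conjSub_mono g hxy) g⁻¹]
    funext w
    change _ = b⁻¹ (elemEnd G x y (b w))
    rw [← hbp, ← hbq,
      elemEnd_apply_apply hb ((hstab hp).trans_le (hxy.trans_eq (hstab hq).symm))]
    exact (b.symm_apply_apply _).symm
  rw [hconj]
  exact M.mul_mem (M.mul_mem (haut ⟨b⁻¹, inv_mem hb, rfl⟩) hmem) (haut ⟨b, hb, rfl⟩)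

end Swap

section Generation

variable {G X : Type*} [Group G] [MulAction G X]

open Function

lemma exists_factor_elemEnd {f : Function.End X} (hf : f ∈ gEnd G X) {z : X} (hz : f z ≠ z)
    (hfz : f (f z) = f z) :
    f z ∉ orbit G z ∧ ∃ f' ∈ gEnd G X, fixedPoints f ⊂ fixedPoints f' ∧
      f = f' * elemEnd G z (f z) := by
  classical
  have hnot : f z ∉ orbit G z := by
    intro h
    obtain ⟨g, hg⟩ := mem_orbit_iff.mp h
    refine hz ((apply_smul_eq_smul_iff hf g z).mp ?_)
    rw [hg]
    exact hfz
  refine ⟨hnot, fun w => if w ∈ orbit G z then w else f w,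
    ite_mem_gEnd (fun _ _ => smul_mem_orbit_iff) (gEnd G X).one_mem hf, ?_, ?_⟩
  · refine Set.ssubset_iff_of_subset (fun w (hw : f w = w) => ?_) |>.mpr ⟨z, ?_, hz⟩
    · change (if w ∈ orbit G z then w else f w) = w
      split_ifs <;> simp [hw]
    · exact if_pos (mem_orbit_self z)
  · funext w
    change f w = if elemEnd G z (f z) w ∈ orbit G z then _ else f (elemEnd G z (f z) w)
    by_cases hw : w ∈ orbit G z
    · obtain ⟨g, rfl⟩ := mem_orbit_iff.mp hw
      have hle := stabilizer_le_stabilizer_apply hf z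
      rw [elemEnd_smul hle, if_neg (mt smul_mem_orbit_iff.mp hnot), hf, hf, hfz]
    · rw [elemEnd_apply_of_notMem hw, if_neg hw]

lemma exists_factor_gAut {f : Function.End X} (hf : f ∈ gEnd G X) {z : X}
    (hstab : stabilizer G (f z) = stabilizer G z) (hfz : f (f z) ≠ f z) :
    ∃ f' ∈ gEnd G X, ∃ b ∈ gAut G X,
      fixedPoints f ⊂ fixedPoints f' ∧ ∀ w, f w = f' (b w) := by
  obtain ⟨b, hb, hbz, hbfix⟩ := exists_gAut_apply_eq hstab.symm
  refine ⟨f * (show Function.End X from ⇑b⁻¹), (gEnd G X).mul_mem hf (inv_mem hb), b, hb, ?_,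
    fun w => congrArg f (b.symm_apply_apply w).symm⟩
  have hfix : ∀ w, f w = w → b w = w := fun w hw => hbfix w
    (fun h => by
      obtain ⟨g, rfl⟩ := mem_orbit_iff.mp h
      have hz' := (apply_smul_eq_smul_iff hf g z).mp hw
      exact hfz (by rw [hz', hz']))
    (fun h => by
      obtain ⟨g, rfl⟩ := mem_orbit_iff.mp h
      exact hfz ((apply_smul_eq_smul_iff hf g (f z)).mp hw))
  refine Set.ssubset_iff_of_subset (fun w (hw : f w = w) => ?_) |>.mpr ⟨f z, ?_, hfz⟩
  · change f (b⁻¹ w) = w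
    rw [Equiv.Perm.inv_eq_iff_eq.mpr (hfix w hw).symm, hw]
  · have hbz' : b⁻¹ (f z) = z := Equiv.Perm.inv_eq_iff_eq.mpr hbz.symm
    change f (b⁻¹ (f z)) = f z
    rw [hbz']

theorem gEnd_le_of_elemEnd_mem [Finite X] {M : Submonoid (Function.End X)}
    (haut : autSet G X ⊆ M)
    (helem : ∀ p q : X, stabilizer G p ≤ stabilizer G q → q ∉ orbit G p →
      elemEnd G p q ∈ M) :
    gEnd G X ≤ M := by
  intro f hf
  induction hn : (fixedPoints f)ᶜ.ncard using Nat.strong_induction_on generalizing f with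
  | _ n ih =>
    have hsmaller : ∀ f' ∈ gEnd G X, fixedPoints f ⊂ fixedPoints f' → f' ∈ M :=
      fun f' hf' hlt => ih _ (hn ▸ Set.ncard_lt_ncard (compl_lt_compl_iff_lt.mpr hlt)) hf' rfl
    by_cases hid : ∀ z, f z = z
    · exact (funext hid : f = 1) ▸ M.one_mem
    push Not at hid
    -- maximality forces `stabilizer G (f z) = stabilizer G z` as soon as `f z` is moved too
    obtain ⟨z, hz, hmax⟩ :=
      (Set.toFinite {z | f z ≠ z}).exists_maximalFor (stabilizer G) _ hid
    by_cases hfz : f (f z) = f z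
    · obtain ⟨hnot, f', hf', hlt, hfac⟩ := exists_factor_elemEnd hf hz hfz
      rw [hfac]
      exact M.mul_mem (hsmaller f' hf' hlt)
        (helem _ _ (stabilizer_le_stabilizer_apply hf z) hnot)
    · have hle := stabilizer_le_stabilizer_apply hf z
      obtain ⟨f', hf', b, hb, hlt, hfac⟩ :=
        exists_factor_gAut hf (le_antisymm (hmax hfz hle) hle) hfz
      rw [show f = f' * (show Function.End X from ⇑b) from funext hfac]
      exact M.mul_mem (hsmaller f' hf' hlt) (haut ⟨b, hb, rfl⟩)

end Generation

section Collapse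

variable (G : Type*) {X : Type*} [Group G] [MulAction G X]

def CollapsesAt (c : Function.End X) (x : X) : Prop :=
  ¬ Function.Injective c ∧ Set.InjOn c (orbit G x)ᶜ ∧
    ∀ z ∉ orbit G x, stabilizer G (c z) = stabilizer G z

variable {G}

lemma elemEnd_collapsesAt {x y : X} (hxy : stabilizer G x ≤ stabilizer G y)
    (hyx : y ∉ orbit G x) : CollapsesAt G (elemEnd G x y) x := by
  refine ⟨fun hinj => hyx ?_, fun z₁ h₁ z₂ h₂ h => ?_, fun z hz => by
    rw [elemEnd_apply_of_notMem hz]⟩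
  · have hxy_eq : x = y := hinj (by rw [elemEnd_apply_self hxy, elemEnd_apply_of_notMem hyx])
    exact hxy_eq ▸ mem_orbit_self x
  · rwa [elemEnd_apply_of_notMem h₁, elemEnd_apply_of_notMem h₂] at h

lemma exists_apply_eq_or_stabilizer_conj [Finite X] {c : Function.End X} {x : X}
    (hinj : Set.InjOn c (orbit G x)ᶜ)
    (hstab : ∀ z ∉ orbit G x, stabilizer G (c z) = stabilizer G z) :
    (∃ z ∉ orbit G x, c z = c x) ∨
      ∃ g : G, stabilizer G (c x) = conjSub g (stabilizer G x) := by
  by_contra! ⟨hmerge, hconj⟩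
  -- `c` permutes the points whose stabilizers are conjugate to that of `c x`
  set T : Set X := {z | ∃ g : G, stabilizer G (c x) = conjSub g (stabilizer G z)}
  have hTx : ∀ z ∈ T, z ∉ orbit G x := by
    rintro z ⟨g, hg⟩ hz
    obtain ⟨h, rfl⟩ := mem_orbit_iff.mp hz
    exact hconj (g * h) (by rw [hg, stabilizer_smul_eq_conjSub, conjSub_mul])
  have hmaps : Set.MapsTo c T T := fun z hz => by
    obtain ⟨g, hg⟩ := hz
    exact ⟨g, by rw [hstab z (hTx z ⟨g, hg⟩), hg]⟩
  obtain ⟨z, hz, hzx⟩ := ((Set.toFinite T).injOn_iff_bijOn_of_mapsTo hmaps).mp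
    (hinj.mono hTx) |>.surjOn ⟨1, (conjSub_one _).symm⟩
  exact hmerge z (hTx z hz) hzx

lemma CollapsesAt.exists_apply_eq [Finite G] [Finite X] {c : Function.End X} {x : X}
    (hc : c ∈ gEnd G X) (h : CollapsesAt G c x) : ∃ z ∉ orbit G x, c z = c x := by
  obtain ⟨hnotinj, hinj, hstab⟩ := h
  by_contra! hmerge
  obtain ⟨g, hg⟩ := (exists_apply_eq_or_stabilizer_conj hinj hstab).resolve_left (by simpa)
  have hle := stabilizer_le_stabilizer_apply hc x
  have horbit := injOn_orbit_of_stabilizer_apply_eq hc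
    (hg.trans (conjSub_eq_self_of_le (hg ▸ hle)))
  refine hnotinj (Set.injOn_univ.mp ?_)
  rw [← Set.union_compl_self (orbit G x)]
  refine (Set.injOn_union disjoint_compl_right).mpr ⟨horbit, hinj, fun u hu v hv huv => ?_⟩
  obtain ⟨h, rfl⟩ := mem_orbit_iff.mp hu
  refine hmerge (h⁻¹ • v) (mt smul_mem_orbit_iff.mp hv) ?_
  rw [hc, ← huv, hc, inv_smul_smul]

lemma CollapsesAt.of_mul_of_injective [Finite X] {a b : Function.End X} {x : X}
    (h : CollapsesAt G (a * b) x) (hb : b ∈ gEnd G X) (hbinj : Function.Injective b) :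
    CollapsesAt G a (b x) ∧ stabilizer G (b x) = stabilizer G x := by
  obtain ⟨hnotinj, hinj, hstab⟩ := h
  have hbstab : ∀ z, stabilizer G (b z) = stabilizer G z :=
    fun z => stabilizer_apply_eq_of_injOn hb hbinj.injOn
  have hbsurj := Finite.injective_iff_surjective.mp hbinj
  have horbit : ∀ z, b z ∉ orbit G (b x) ↔ z ∉ orbit G x :=
    fun z => not_congr (apply_mem_orbit_apply_iff hb hbinj)
  refine ⟨⟨fun hainj => hnotinj (hainj.comp hbinj), ?_, ?_⟩, hbstab x⟩
  · intro z₁ h₁ z₂ h₂ hz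
    obtain ⟨u₁, rfl⟩ := hbsurj z₁
    obtain ⟨u₂, rfl⟩ := hbsurj z₂
    exact congrArg b (hinj ((horbit u₁).mp h₁) ((horbit u₂).mp h₂) hz)
  · intro z hz
    obtain ⟨u, rfl⟩ := hbsurj z
    exact (hstab u ((horbit u).mp hz)).trans (hbstab u).symm

lemma CollapsesAt.of_mul_of_not_injective [Finite G] [Finite X] {a b : Function.End X} {x : X}
    (h : CollapsesAt G (a * b) x) (ha : a ∈ gEnd G X) (hb : b ∈ gEnd G X)
    (hbinj : ¬ Function.Injective b) :
    CollapsesAt G b x ∧ stabilizer G (b x) = stabilizer G (a (b x)) := by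
  obtain ⟨-, hinj, hstab⟩ := h
  have hbstab : ∀ z ∉ orbit G x, stabilizer G (b z) = stabilizer G z := fun z hz =>
    le_antisymm ((stabilizer_le_stabilizer_apply ha (b z)).trans (hstab z hz).le)
      (stabilizer_le_stabilizer_apply hb z)
  have hb' : CollapsesAt G b x :=
    ⟨hbinj, fun z₁ h₁ z₂ h₂ hz => hinj h₁ h₂ (congrArg a hz), hbstab⟩
  obtain ⟨z, hz, hzx⟩ := hb'.exists_apply_eq hb
  refine ⟨hb', ?_⟩
  rw [← hzx, hbstab z hz]
  exact (hstab z hz).symm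

lemma exists_collapsesAt_of_mem_closure [Finite G] [Finite X] {W : Set (Function.End X)}
    (hW : W ⊆ gEnd G X) {w : Function.End X} (hw : w ∈ Submonoid.closure (W ∪ autSet G X))
    {x : X} (h : CollapsesAt G w x) :
    ∃ c ∈ W, ∃ x', stabilizer G x' = stabilizer G x ∧ CollapsesAt G c x' ∧
      stabilizer G (c x') = stabilizer G (w x) := by
  have hcl : Submonoid.closure (W ∪ autSet G X) ≤ gEnd G X :=
    Submonoid.closure_le.mpr (Set.union_subset hW fun _ => mem_gEnd_of_mem_autSet)
  induction hw using Submonoid.closure_induction generalizing x with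
  | mem w hw =>
    rcases hw with hw | hw
    · exact ⟨w, hw, x, rfl, h, rfl⟩
    · exact absurd (injective_of_mem_autSet hw) h.1
  | one => exact absurd Function.injective_id h.1
  | mul a b ha hb iha ihb =>
    by_cases hbinj : Function.Injective b
    · obtain ⟨h', hbx⟩ := h.of_mul_of_injective (hcl hb) hbinj
      obtain ⟨c, hcW, x', hx', hc, hcx⟩ := iha h'
      exact ⟨c, hcW, x', hx'.trans hbx, hc, hcx⟩
    · obtain ⟨h', hbx⟩ := h.of_mul_of_not_injective (hcl ha) (hcl hb) hbinj
      obtain ⟨c, hcW, x', hx', hc, hcx⟩ := ihb h'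
      exact ⟨c, hcW, x', hx', hc, hcx.trans hbx⟩

lemma CollapsesAt.exists_stabilizer_eq_conjSub {c : Function.End X} {x x' : X}
    (h : CollapsesAt G c x) (h' : CollapsesAt G c x') :
    ∃ g : G, stabilizer G x' = conjSub g (stabilizer G x) := by
  by_cases hx' : x' ∈ orbit G x
  · obtain ⟨g, rfl⟩ := mem_orbit_iff.mp hx'
    exact ⟨g, stabilizer_smul_eq_conjSub g x⟩
  -- the orbits are disjoint, so `c` preserves every stabilizer; a collision of `c` meets both
  have hstab : ∀ z, stabilizer G (c z) = stabilizer G z := fun z => by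
    by_cases hz : z ∈ orbit G x
    · exact h'.2.2 z fun hz' =>
        hx' (orbit_eq_iff.mp ((orbit_eq_iff.mpr hz').symm.trans (orbit_eq_iff.mpr hz)))
    · exact h.2.2 z hz
  obtain ⟨u, v, huv, hne⟩ := Function.not_injective_iff.mp h.1
  have hmeet : ∀ {y : X}, CollapsesAt G c y →
      ∃ a ∈ orbit G y, stabilizer G a = stabilizer G u :=
    fun {y} hy => by
      by_cases hu : u ∈ orbit G y
      · exact ⟨u, hu, rfl⟩
      by_cases hv : v ∈ orbit G y
      · exact ⟨v, hv, by rw [← hstab u, ← hstab v, huv]⟩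
      · exact absurd (hy.2.1 hu hv huv) hne
  obtain ⟨a, ha, hau⟩ := hmeet h
  obtain ⟨a', ha', hau'⟩ := hmeet h'
  obtain ⟨g, rfl⟩ := mem_orbit_iff.mp ha
  obtain ⟨g', rfl⟩ := mem_orbit_iff.mp ha'
  rw [stabilizer_smul_eq_conjSub, ← hau', stabilizer_smul_eq_conjSub] at hau
  exact ⟨_, eq_conjSub_of_conjSub_eq hau⟩

end Collapse

section Classes

variable {G X : Type*} [Group G] [MulAction G X]

def Serves (c : Function.End X) (K : Subgroup G) (C : Set (Subgroup G)) : Prop :=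
  ∃ x, stabilizer G x = K ∧ CollapsesAt G c x ∧
    nConjClass (Subgroup.normalizer (K : Set G)) (stabilizer G (c x)) = C

lemma Serves.unique {c : Function.End X} (hc : c ∈ gEnd G X) {K : Subgroup G}
    {C C' : Set (Subgroup G)} (h : Serves c K C) (h' : Serves c K C') : C = C' := by
  obtain ⟨x, hx, hcx, rfl⟩ := h
  obtain ⟨x', hx', hcx', rfl⟩ := h'
  by_cases hx'x : x' ∈ orbit G x
  · obtain ⟨g, rfl⟩ := mem_orbit_iff.mp hx'x
    have hg : g ∈ Subgroup.normalizer (K : Set G) := by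
      rw [← conjSub_eq_self_iff, ← hx, ← stabilizer_smul_eq_conjSub, hx', hx]
    rw [hc g x, stabilizer_smul_eq_conjSub, nConjClass_conjSub hg]
  · rw [hcx'.2.2 x (mt mem_orbit_symm.mp hx'x), hcx.2.2 x' hx'x, hx, hx']

variable (G X) in
/-- The classes `C ∈ U(K)` that require a generator collapsing an orbit of type `[K]` onto
one of type `C`; for `C = [K]_{N_G(K)}` this needs a second orbit of type `[K]`, which is
where `κ_G(X)` comes from. -/
def collapseClasses (K : Subgroup G) : Set (Set (Subgroup G)) :=
  {C ∈ stabU G X K | C = nConjClass (Subgroup.normalizer (K : Set G)) K →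
    2 ≤ (classOrbits G X K).ncard}

lemma orbit_mem_classOrbits {x : X} {K : Subgroup G} (hx : stabilizer G x = K) :
    orbit G x ∈ classOrbits G X K :=
  ⟨x, ⟨1, by rw [conjSub_one, hx]⟩, rfl⟩

lemma nConjClass_self_mem_stabU {x : X} {K : Subgroup G} (hx : stabilizer G x = K) :
    nConjClass (Subgroup.normalizer (K : Set G)) K ∈ stabU G X K :=
  ⟨x, hx.ge, by rw [hx]⟩

lemma exists_of_mem_collapseClasses [Finite G] [Finite X] {K : Subgroup G}
    {C : Set (Subgroup G)} {x₀ : X} (hx₀ : stabilizer G x₀ = K)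
    (hC : C ∈ collapseClasses G X K) :
    ∃ y, K ≤ stabilizer G y ∧
      nConjClass (Subgroup.normalizer (K : Set G)) (stabilizer G y) = C ∧ y ∉ orbit G x₀ := by
  obtain ⟨⟨y, hy, rfl⟩, hbase⟩ := hC
  by_cases hyx : y ∉ orbit G x₀
  · exact ⟨y, hy, rfl, hyx⟩
  -- then `stabilizer G y = K`, and a second orbit of type `[K]` provides the point
  obtain ⟨g, rfl⟩ := mem_orbit_iff.mp (not_not.mp hyx)
  have hyK : stabilizer G (g • x₀) = K := by
    rw [stabilizer_smul_eq_conjSub, hx₀] at hy ⊢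
    exact conjSub_eq_self_of_le hy
  obtain ⟨s, t, hs, ht, hst⟩ := (Set.one_lt_ncard_iff (Set.toFinite _)).mp (hbase (by rw [hyK]))
  obtain ⟨o, ⟨z, ⟨h, hz⟩, rfl⟩, ho⟩ :
      ∃ o ∈ classOrbits G X K, o ≠ orbit G x₀ := by
    by_cases hs' : s = orbit G x₀
    · exact ⟨t, ht, fun h => hst (hs'.trans h.symm)⟩
    · exact ⟨s, hs, hs'⟩
  have hzK : stabilizer G (h⁻¹ • z) = K := by
    rw [stabilizer_smul_eq_conjSub, hz, ← conjSub_mul, inv_mul_cancel, conjSub_one]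
  refine ⟨h⁻¹ • z, hzK.ge, by rw [hzK, hyK], fun hzx => ho ?_⟩
  rw [← orbit_smul h⁻¹ z]
  exact orbit_eq_iff.mpr hzx

lemma mem_collapseClasses [Finite X] {K : Subgroup G} {p q : X} (hp : stabilizer G p = K)
    (hq : K ≤ stabilizer G q) (hqp : q ∉ orbit G p) :
    nConjClass (Subgroup.normalizer (K : Set G)) (stabilizer G q) ∈ collapseClasses G X K := by
  refine ⟨⟨q, hq, rfl⟩, fun hC => ?_⟩
  obtain ⟨n, hn, hqn⟩ := nConjClass_eq_iff.mp hC
  have hqK : stabilizer G q = K := hqn.trans (conjSub_eq_self_iff.mpr hn)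
  exact (Set.one_lt_ncard_iff (Set.toFinite _)).mpr ⟨orbit G p, orbit G q,
    orbit_mem_classOrbits hp, orbit_mem_classOrbits hqK, fun h => hqp (orbit_eq_iff.mp h.symm)⟩

lemma ncard_collapseClasses [Finite G] [Finite X] {x : X} {K : Subgroup G}
    (hx : stabilizer G x = K) :
    (collapseClasses G X K).ncard =
      (stabU G X K).ncard - if (classOrbits G X K).ncard = 1 then 1 else 0 := by
  split_ifs with h1
  · rw [← Set.ncard_sdiff_singleton_of_mem (nConjClass_self_mem_stabU hx)]
    congr 1
    ext C
    simp [collapseClasses, h1]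
  · have h2 : 2 ≤ (classOrbits G X K).ncard := by
      have := (Set.ncard_pos (Set.toFinite _)).mpr ⟨_, orbit_mem_classOrbits hx⟩
      omega
    rw [Nat.sub_zero]
    congr 1
    ext C
    simp [collapseClasses, h2]

end Classes

lemma relRank_eq_of_bounds {M : Type*} [Monoid M] {T : Submonoid M} {N : Set M} {n : ℕ}
    (hgen : ∃ W : Finset M, W.card ≤ n ∧ Submonoid.closure (↑W ∪ N) = T)
    (hmin : ∀ W : Finset M, Submonoid.closure (↑W ∪ N) = T → n ≤ W.card) :
    relRank T N = n := by
  obtain ⟨W, hWn, hW⟩ := hgen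
  have hmem : n ∈ {m | ∃ W : Finset M, W.card = m ∧ Submonoid.closure (↑W ∪ N) = T} :=
    ⟨W, le_antisymm hWn (hmin W hW), hW⟩
  exact le_antisymm (Nat.sInf_le hmem)
    (le_csInf ⟨n, hmem⟩ fun m ⟨W', hW'm, hW'⟩ => hW'm ▸ hmin W' hW')

section Rank

variable {G X : Type*} [Group G] [MulAction G X] [Finite G] [Finite X] {r : ℕ}
  {H : Fin r → Subgroup G}

lemma card_collapseClasses_le_of_closure_eq (hH1 : ∀ i, ∃ x : X, stabilizer G x = H i)
    (hH2 : ∀ x : X, ∃! i, ∃ g : G, stabilizer G x = conjSub g (H i))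
    {W : Finset (Function.End X)} (hcl : Submonoid.closure (↑W ∪ autSet G X) = gEnd G X) :
    Nat.card (Σ i, collapseClasses G X (H i)) ≤ W.card := by
  have hW : (↑W : Set (Function.End X)) ⊆ gEnd G X := fun w hw =>
    hcl ▸ Submonoid.subset_closure (Or.inl hw)
  have hserve : ∀ s : Σ i, collapseClasses G X (H i), ∃ c ∈ W, Serves c (H s.1) s.2 := by
    rintro ⟨i, C, hC⟩
    obtain ⟨x, hx⟩ := hH1 i
    obtain ⟨y, hle, hyC, hyx⟩ := exists_of_mem_collapseClasses hx hC
    have hxy : stabilizer G x ≤ stabilizer G y := hx ▸ hle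
    obtain ⟨c, hcW, x', hx', hc, hcx⟩ := exists_collapsesAt_of_mem_closure hW
      (hcl ▸ elemEnd_mem_gEnd hxy) (elemEnd_collapsesAt hxy hyx)
    exact ⟨c, hcW, x', hx'.trans hx, hc, by rw [hcx, elemEnd_apply_self hxy, hyC]⟩
  choose c hcW hc using hserve
  refine (Nat.card_le_card_of_injective (fun s => (⟨c s, hcW s⟩ : W)) ?_).trans_eq
    (Nat.card_eq_fintype_card.trans (Fintype.card_coe W))
  rintro ⟨i, C, hC⟩ ⟨i', C', hC'⟩ heq
  have hcc : c ⟨i, C, hC⟩ = c ⟨i', C', hC'⟩ := congrArg Subtype.val heq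
  obtain ⟨x, hx, hcx, -⟩ := hc ⟨i, C, hC⟩
  obtain ⟨x', hx', hcx', -⟩ := hc ⟨i', C', hC'⟩
  obtain ⟨g, hg⟩ := (hcc ▸ hcx).exists_stabilizer_eq_conjSub hcx'
  obtain rfl : i = i' := (hH2 x').unique ⟨g, by rw [hg, hx]⟩ ⟨1, by rw [hx', conjSub_one]⟩
  have hserve := hc ⟨i, C, hC⟩
  rw [hcc] at hserve
  obtain rfl : C = C' := hserve.unique (hW (hcW _)) (hc ⟨i, C', hC'⟩)
  rfl

lemma exists_finset_closure_eq_gEnd (hH1 : ∀ i, ∃ x : X, stabilizer G x = H i)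
    (hH2 : ∀ x : X, ∃! i, ∃ g : G, stabilizer G x = conjSub g (H i)) :
    ∃ W : Finset (Function.End X), W.card ≤ Nat.card (Σ i, collapseClasses G X (H i)) ∧
      Submonoid.closure (↑W ∪ autSet G X) = gEnd G X := by
  classical
  choose x hx using hH1
  choose y hyle hyC hyx using fun s : Σ i, collapseClasses G X (H i) =>
    exists_of_mem_collapseClasses (hx s.1) s.2.2
  have := Fintype.ofFinite (Σ i, collapseClasses G X (H i))
  set W := Finset.univ.image fun s => elemEnd G (x s.1) (y s)
  have haut : autSet G X ⊆ Submonoid.closure (↑W ∪ autSet G X) := fun a ha =>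
    Submonoid.subset_closure (Or.inr ha)
  refine ⟨W, Finset.card_image_le.trans Nat.card_eq_fintype_card.ge, le_antisymm ?_ ?_⟩
  · refine Submonoid.closure_le.mpr (Set.union_subset ?_ fun _ => mem_gEnd_of_mem_autSet)
    intro w hw
    obtain ⟨s, -, rfl⟩ := Finset.mem_image.mp hw
    exact elemEnd_mem_gEnd ((hx s.1).trans_le (hyle s))
  refine gEnd_le_of_elemEnd_mem haut fun p q hpq hqp => ?_
  obtain ⟨i, g, hg⟩ := (hH2 p).exists
  have hp : stabilizer G (g⁻¹ • p) = H i := by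
    rw [stabilizer_smul_eq_conjSub, hg, ← conjSub_mul, inv_mul_cancel, conjSub_one]
  have hq : H i ≤ stabilizer G (g⁻¹ • q) := by
    rw [← hp, stabilizer_smul_eq_conjSub, stabilizer_smul_eq_conjSub]
    exact conjSub_mono _ hpq
  set s : Σ i, collapseClasses G X (H i) :=
    ⟨i, _, mem_collapseClasses hp hq (by rwa [orbit_smul, smul_mem_orbit_iff])⟩
  obtain ⟨n, hn, hqn⟩ := nConjClass_eq_iff.mp (hyC s).symm
  refine elemEnd_mem_of_stabilizer_conj (g := g * n) haut ((hx i).trans_le (hyle s)) (hyx s) hqp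
    ?_ ?_ (Submonoid.subset_closure (Or.inl (Finset.mem_image_of_mem _ (Finset.mem_univ s))))
  · rw [hg, conjSub_mul, hx, conjSub_eq_self_iff.mpr hn]
  · rw [conjSub_mul, ← hqn, ← stabilizer_smul_eq_conjSub, smul_inv_smul]

end Rank

/-- **Main theorem.**
`Rank(End_G(X) : Aut_G(X)) = Σᵢ |U(Hᵢ)| − κ_G(X)`. -/
theorem stmt16 {G X : Type*} [Group G] [MulAction G X] [Finite G] [Finite X]
    (r : ℕ) (H : Fin r → Subgroup G)
    (hH1 : ∀ i, ∃ x : X, MulAction.stabilizer G x = H i)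
    (hH2 : ∀ x : X, ∃! i, ∃ g : G, MulAction.stabilizer G x = conjSub g (H i))
    :
    relRank (gEnd G X) (autSet G X) =
      (∑ i, (stabU G X (H i)).ncard) -
      Set.ncard {i : Fin r | (classOrbits G X (H i)).ncard = 1} := by
  classical
  rw [relRank_eq_of_bounds (exists_finset_closure_eq_gEnd hH1 hH2)
      fun W => card_collapseClasses_le_of_closure_eq hH1 hH2,
    Nat.card_sigma, Set.ncard_eq_toFinset_card', Set.toFinset_ofPred, Finset.card_filter,
    ← Finset.sum_tsub_distrib]
  · exact Finset.sum_congr rfl fun i _ => ncard_collapseClasses (hH1 i).choose_spec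
  · intro i _
    have := (Set.ncard_pos (Set.toFinite _)).mpr
      ⟨_, nConjClass_self_mem_stabU (hH1 i).choose_spec⟩
    split_ifs <;> omega
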